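/- arXiv:math/0106133 — 4 statements merged into one kernel-verified Lean document; each statement's English description precedes it below -/
import Mathlib

section
/- Let n points on each side of the coordinate triangle x1*x2*x3=0 in P^2 be given: on the side x_i=0 the points are cut out by the binary form B_i(x_j,x_k) = sum_{m=0}^n b_{im} x_j^m x_k^{n-m} (where (i,j,k) is a cyclic permutation of (1,2,3)), and none of the points is a vertex of the triangle. Then there exists a ternary form A of degree n cutting out all 3n points if and only if b_{10}*b_{20}*b_{30} = b_{1n}*b_{2n}*b_{3n}. -/
open MvPolynomial

private lemma sum_split {M : Type*} [AddCommMonoid M] {n : ℕ} (hn : 0 < n) (g : ℕ → M) :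
    ∑ m ∈ Finset.range (n + 1), g m
      = g 0 + (∑ m ∈ Finset.Ioo 0 n, g m) + g n := by
  rw [Finset.sum_range_succ, Finset.range_eq_Ico, ← Finset.Ioo_insert_left hn,
    Finset.sum_insert (by simp)]

private lemma eval_aeval' (pt : Fin 3 → ℂ) (s : Fin 3 → MvPolynomial (Fin 3) ℂ)
    (p : MvPolynomial (Fin 3) ℂ) :
    eval pt (aeval s p) = eval (fun v => eval pt (s v)) p := by
  rw [aeval_def, eval_eval₂]
  have : (eval pt).comp (algebraMap ℂ (MvPolynomial (Fin 3) ℂ)) = RingHom.id ℂ := by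
    ext r; simp [algebraMap_eq]
  rw [this, eval₂_id]

set_option maxHeartbeats 1600000 in
/-- The triangle lemma.  On the side `x_i = 0` of the coordinate triangle in
`ℙ²` the `n` points (none at a vertex) are cut out by the binary form
`B_i(x_j, x_k) = ∑_{m=0}^{n} b_{i m} x_j^m x_k^{n-m}`, where `(i,j,k)` is the
cyclic permutation `(i, i+1, i+2)` of `(1,2,3)`.  There is a ternary form `A`
of degree `n` whose restriction to each side `x_i = 0` is a nonzero scalar
multiple of `B_i` if and only if `b_{1,0} b_{2,0} b_{3,0} = b_{1,n} b_{2,n} b_{3,n}`. -/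
theorem points_on_triangle_cut_out_iff (n : ℕ) (hn : 0 < n)
    (b : Fin 3 → ℕ → ℂ)
    (hb0 : ∀ i, b i 0 ≠ 0) (hbn : ∀ i, b i n ≠ 0)
    (B : Fin 3 → MvPolynomial (Fin 3) ℂ)
    (hB : ∀ i, B i = ∑ m ∈ Finset.range (n + 1),
      C (b i m) * X (i + 1) ^ m * X (i + 2) ^ (n - m)) :
    (∃ A : MvPolynomial (Fin 3) ℂ, A.IsHomogeneous n ∧
        ∀ i : Fin 3, ∃ c : ℂ, c ≠ 0 ∧
          aeval (fun v : Fin 3 => if v = i then 0 else X v) A = C c * B i)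
      ↔ b 0 0 * b 1 0 * b 2 0 = b 0 n * b 1 n * b 2 n := by
  constructor
  · rintro ⟨A, -, hA⟩
    choose c hc0 hc using hA
    set f : Fin 3 → ℂ := fun j => eval (fun v => if v = j then (1:ℂ) else 0) A with hf
    have key : ∀ i j : Fin 3, j ≠ i →
        eval (fun v => if v = j then (1:ℂ) else 0)
          (aeval (fun v : Fin 3 => if v = i then 0 else X v) A) = f j := by
      intro i j hji
      rw [eval_aeval']
      have : (fun v => eval (fun w => if w = j then (1:ℂ) else 0) (if v = i then (0 : MvPolynomial (Fin 3) ℂ) else X v))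
          = fun v : Fin 3 => if v = j then (1:ℂ) else 0 := by
        funext v
        by_cases hv : v = i
        · subst hv
          simp [Ne.symm hji]
        · simp [hv]
      rw [this]
    have hne : ∀ i : Fin 3, i + 2 ≠ i + 1 := by decide
    have hne' : ∀ i : Fin 3, i + 1 ≠ i + 2 := by decide
    have hne1 : ∀ i : Fin 3, i + 1 ≠ i := by decide
    have hne2 : ∀ i : Fin 3, i + 2 ≠ i := by decide
    have e1 : ∀ i : Fin 3, f (i + 1) = c i * b i n := by
      intro i
      have h := congrArg (eval (fun v => if v = i + 1 then (1:ℂ) else 0)) (hc i)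
      rw [key i (i + 1) (hne1 i)] at h
      rw [h, hB i, map_mul, eval_C, map_sum]
      congr 1
      rw [Finset.sum_eq_single n]
      · simp
      · intro m hm hmn
        simp only [Finset.mem_range] at hm
        simp [hne i, zero_pow (show n - m ≠ 0 by omega)]
      · intro h; simp at h
    have e2 : ∀ i : Fin 3, f (i + 2) = c i * b i 0 := by
      intro i
      have h := congrArg (eval (fun v => if v = i + 2 then (1:ℂ) else 0)) (hc i)
      rw [key i (i + 2) (hne2 i)] at h
      rw [h, hB i, map_mul, eval_C, map_sum]
      congr 1
      rw [Finset.sum_eq_single 0]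
      · simp
      · intro m hm hmn
        simp [hne' i, zero_pow hmn]
      · intro h; simp at h
    have E10 : f 1 = c 0 * b 0 n := by have := e1 0; rwa [show ((0:Fin 3)+1) = 1 by decide] at this
    have E11 : f 2 = c 1 * b 1 n := by have := e1 1; rwa [show ((1:Fin 3)+1) = 2 by decide] at this
    have E12 : f 0 = c 2 * b 2 n := by have := e1 2; rwa [show ((2:Fin 3)+1) = 0 by decide] at this
    have E20 : f 2 = c 0 * b 0 0 := by have := e2 0; rwa [show ((0:Fin 3)+2) = 2 by decide] at this
    have E21 : f 0 = c 1 * b 1 0 := by have := e2 1; rwa [show ((1:Fin 3)+2) = 0 by decide] at this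
    have E22 : f 1 = c 2 * b 2 0 := by have := e2 2; rwa [show ((2:Fin 3)+2) = 1 by decide] at this
    -- E10 : f 1 = c 0 * b 0 n ; E11 : f 2 = c 1 * b 1 n ; E12 : f 0 = c 2 * b 2 n
    -- E20 : f 2 = c 0 * b 0 0 ; E21 : f 0 = c 1 * b 1 0 ; E22 : f 1 = c 2 * b 2 0
    have hprod : (c 0 * c 1 * c 2) * (b 0 0 * b 1 0 * b 2 0)
        = (c 0 * c 1 * c 2) * (b 0 n * b 1 n * b 2 n) := by
      calc (c 0 * c 1 * c 2) * (b 0 0 * b 1 0 * b 2 0)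
          = (c 0 * b 0 0) * (c 1 * b 1 0) * (c 2 * b 2 0) := by ring
        _ = f 2 * f 0 * f 1 := by rw [← E20, ← E21, ← E22]
        _ = (c 2 * b 2 n) * (c 0 * b 0 n) * (c 1 * b 1 n) := by rw [E10, E11, E12]; ring
        _ = (c 0 * c 1 * c 2) * (b 0 n * b 1 n * b 2 n) := by ring
    exact mul_left_cancel₀ (by simp [hc0 0, hc0 1, hc0 2]) hprod
  · intro hprod
    set c1 : ℂ := b 0 0 / b 1 n with hc1
    set c2 : ℂ := b 0 n / b 2 0 with hc2
    have hCa : ∀ x : ℂ, algebraMap ℂ (MvPolynomial (Fin 3) ℂ) x = C x :=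
      fun x => by rw [algebraMap_eq]
    refine ⟨(∑ m ∈ Finset.Ioo 0 n, C (b 0 m) * X 1 ^ m * X 2 ^ (n - m))
        + (∑ m ∈ Finset.Ioo 0 n, C (c1 * b 1 m) * X 2 ^ m * X 0 ^ (n - m))
        + (∑ m ∈ Finset.Ioo 0 n, C (c2 * b 2 m) * X 0 ^ m * X 1 ^ (n - m))
        + (C (c2 * b 2 n) * X 0 ^ n + C (b 0 n) * X 1 ^ n + C (b 0 0) * X 2 ^ n), ?_, ?_⟩
    · -- homogeneity
      have hterm : ∀ (a : ℂ) (u v : Fin 3) (m : ℕ), m ≤ n →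
          (C a * X u ^ m * X v ^ (n - m) : MvPolynomial (Fin 3) ℂ).IsHomogeneous n := by
        intro a u v m hm
        have h := ((isHomogeneous_C (Fin 3) a).mul ((isHomogeneous_X ℂ u).pow m)).mul
          ((isHomogeneous_X ℂ v).pow (n - m))
        have : 0 + 1 * m + 1 * (n - m) = n := by omega
        rwa [this] at h
      have hpure : ∀ (a : ℂ) (u : Fin 3),
          (C a * X u ^ n : MvPolynomial (Fin 3) ℂ).IsHomogeneous n := by
        intro a u
        have h := (isHomogeneous_C (Fin 3) a).mul ((isHomogeneous_X ℂ u).pow n)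
        have : 0 + 1 * n = n := by omega
        rwa [this] at h
      refine (((IsHomogeneous.sum _ _ _ fun m hm => ?_).add
        (IsHomogeneous.sum _ _ _ fun m hm => ?_)).add
        (IsHomogeneous.sum _ _ _ fun m hm => ?_)).add
        (((hpure _ _).add (hpure _ _)).add (hpure _ _)) <;>
        exact hterm _ _ _ m (le_of_lt (Finset.mem_Ioo.mp hm).2)
    · intro i
      fin_cases i <;> beta_reduce <;>
        simp only [Fin.isValue, Fin.zero_eta, Fin.mk_one, Fin.reduceFinMk]
      · refine ⟨1, one_ne_zero, ?_⟩
        rw [hB 0]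
        rw [show ((0:Fin 3) + 1) = 1 from rfl, show ((0:Fin 3) + 2) = 2 from rfl]
        rw [sum_split hn]
        have hsum1 : (aeval (fun v : Fin 3 => if v = 0 then (0 : MvPolynomial (Fin 3) ℂ) else X v))
            (∑ m ∈ Finset.Ioo 0 n, C (b 0 m) * X 1 ^ m * X 2 ^ (n - m))
            = ∑ m ∈ Finset.Ioo 0 n, C (b 0 m) * X 1 ^ m * X 2 ^ (n - m) := by
          rw [map_sum]
          refine Finset.sum_congr rfl fun m hm => ?_
          simp [hCa]
        have hsum2 : (aeval (fun v : Fin 3 => if v = 0 then (0 : MvPolynomial (Fin 3) ℂ) else X v))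
            (∑ m ∈ Finset.Ioo 0 n, C (c1 * b 1 m) * X 2 ^ m * X 0 ^ (n - m)) = 0 := by
          rw [map_sum]
          refine Finset.sum_eq_zero fun m hm => ?_
          simp only [Finset.mem_Ioo] at hm
          simp [zero_pow (show n - m ≠ 0 by omega)]
        have hsum3 : (aeval (fun v : Fin 3 => if v = 0 then (0 : MvPolynomial (Fin 3) ℂ) else X v))
            (∑ m ∈ Finset.Ioo 0 n, C (c2 * b 2 m) * X 0 ^ m * X 1 ^ (n - m)) = 0 := by
          rw [map_sum]
          refine Finset.sum_eq_zero fun m hm => ?_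
          simp only [Finset.mem_Ioo] at hm
          simp [zero_pow (show m ≠ 0 by omega)]
        rw [map_add, map_add, map_add, hsum1, hsum2, hsum3]
        have hp : (aeval (fun v : Fin 3 => if v = 0 then (0 : MvPolynomial (Fin 3) ℂ) else X v))
            (C (c2 * b 2 n) * X 0 ^ n + C (b 0 n) * X 1 ^ n + C (b 0 0) * X 2 ^ n)
            = C (b 0 n) * X 1 ^ n + C (b 0 0) * X 2 ^ n := by
          simp +decide [hCa, zero_pow hn.ne']
        rw [hp, C_1, one_mul, Nat.sub_zero, Nat.sub_self, pow_zero, pow_zero]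
        ring
      · refine ⟨c1, div_ne_zero (hb0 0) (hbn 1), ?_⟩
        rw [hB 1]
        rw [show ((1:Fin 3) + 1) = 2 by decide, show ((1:Fin 3) + 2) = 0 by decide]
        rw [sum_split hn]
        have hsum1 : (aeval (fun v : Fin 3 => if v = 1 then (0 : MvPolynomial (Fin 3) ℂ) else X v))
            (∑ m ∈ Finset.Ioo 0 n, C (b 0 m) * X 1 ^ m * X 2 ^ (n - m)) = 0 := by
          rw [map_sum]
          refine Finset.sum_eq_zero fun m hm => ?_
          simp only [Finset.mem_Ioo] at hm
          simp [zero_pow (show m ≠ 0 by omega)]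
        have hsum2 : (aeval (fun v : Fin 3 => if v = 1 then (0 : MvPolynomial (Fin 3) ℂ) else X v))
            (∑ m ∈ Finset.Ioo 0 n, C (c1 * b 1 m) * X 2 ^ m * X 0 ^ (n - m))
            = ∑ m ∈ Finset.Ioo 0 n, C (c1 * b 1 m) * X 2 ^ m * X 0 ^ (n - m) := by
          rw [map_sum]
          refine Finset.sum_congr rfl fun m hm => ?_
          simp [hCa]
        have hsum3 : (aeval (fun v : Fin 3 => if v = 1 then (0 : MvPolynomial (Fin 3) ℂ) else X v))
            (∑ m ∈ Finset.Ioo 0 n, C (c2 * b 2 m) * X 0 ^ m * X 1 ^ (n - m)) = 0 := by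
          rw [map_sum]
          refine Finset.sum_eq_zero fun m hm => ?_
          simp only [Finset.mem_Ioo] at hm
          simp [zero_pow (show n - m ≠ 0 by omega)]
        have hmulsum : C c1 * (∑ m ∈ Finset.Ioo 0 n,
              C (b 1 m) * X 2 ^ m * X 0 ^ (n - m) : MvPolynomial (Fin 3) ℂ)
            = ∑ m ∈ Finset.Ioo 0 n, C (c1 * b 1 m) * X 2 ^ m * X 0 ^ (n - m) := by
          rw [Finset.mul_sum]
          exact Finset.sum_congr rfl fun m _ => by rw [C_mul]; ring
        have hd0 : c2 * b 2 n = c1 * b 1 0 := by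
          rw [hc1, hc2, div_mul_eq_mul_div, div_mul_eq_mul_div,
            div_eq_div_iff (hb0 2) (hbn 1)]
          linear_combination -hprod
        have hd2 : (b 0 0 : ℂ) = c1 * b 1 n := by
          rw [hc1, div_mul_cancel₀ _ (hbn 1)]
        rw [map_add, map_add, map_add, hsum1, hsum2, hsum3]
        have hp : (aeval (fun v : Fin 3 => if v = 1 then (0 : MvPolynomial (Fin 3) ℂ) else X v))
            (C (c2 * b 2 n) * X 0 ^ n + C (b 0 n) * X 1 ^ n + C (b 0 0) * X 2 ^ n)
            = C (c2 * b 2 n) * X 0 ^ n + C (b 0 0) * X 2 ^ n := by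
          simp +decide [hCa, zero_pow hn.ne']
        rw [hp, hd0, hd2, mul_add, mul_add, hmulsum,
          Nat.sub_zero, Nat.sub_self, pow_zero, pow_zero]
        simp only [C_mul]
        ring
      · refine ⟨c2, div_ne_zero (hbn 0) (hb0 2), ?_⟩
        rw [hB 2]
        rw [show ((2:Fin 3) + 1) = 0 by decide, show ((2:Fin 3) + 2) = 1 by decide]
        rw [sum_split hn]
        have hsum1 : (aeval (fun v : Fin 3 => if v = 2 then (0 : MvPolynomial (Fin 3) ℂ) else X v))
            (∑ m ∈ Finset.Ioo 0 n, C (b 0 m) * X 1 ^ m * X 2 ^ (n - m)) = 0 := by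
          rw [map_sum]
          refine Finset.sum_eq_zero fun m hm => ?_
          simp only [Finset.mem_Ioo] at hm
          simp [zero_pow (show n - m ≠ 0 by omega)]
        have hsum2 : (aeval (fun v : Fin 3 => if v = 2 then (0 : MvPolynomial (Fin 3) ℂ) else X v))
            (∑ m ∈ Finset.Ioo 0 n, C (c1 * b 1 m) * X 2 ^ m * X 0 ^ (n - m)) = 0 := by
          rw [map_sum]
          refine Finset.sum_eq_zero fun m hm => ?_
          simp only [Finset.mem_Ioo] at hm
          simp [zero_pow (show m ≠ 0 by omega)]
        have hsum3 : (aeval (fun v : Fin 3 => if v = 2 then (0 : MvPolynomial (Fin 3) ℂ) else X v))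
            (∑ m ∈ Finset.Ioo 0 n, C (c2 * b 2 m) * X 0 ^ m * X 1 ^ (n - m))
            = ∑ m ∈ Finset.Ioo 0 n, C (c2 * b 2 m) * X 0 ^ m * X 1 ^ (n - m) := by
          rw [map_sum]
          refine Finset.sum_congr rfl fun m hm => ?_
          simp [hCa]
        have hmulsum : C c2 * (∑ m ∈ Finset.Ioo 0 n,
              C (b 2 m) * X 0 ^ m * X 1 ^ (n - m) : MvPolynomial (Fin 3) ℂ)
            = ∑ m ∈ Finset.Ioo 0 n, C (c2 * b 2 m) * X 0 ^ m * X 1 ^ (n - m) := by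
          rw [Finset.mul_sum]
          exact Finset.sum_congr rfl fun m _ => by rw [C_mul]; ring
        have hd1 : (b 0 n : ℂ) = c2 * b 2 0 := by
          rw [hc2, div_mul_cancel₀ _ (hb0 2)]
        rw [map_add, map_add, map_add, hsum1, hsum2, hsum3]
        have hp : (aeval (fun v : Fin 3 => if v = 2 then (0 : MvPolynomial (Fin 3) ℂ) else X v))
            (C (c2 * b 2 n) * X 0 ^ n + C (b 0 n) * X 1 ^ n + C (b 0 0) * X 2 ^ n)
            = C (c2 * b 2 n) * X 0 ^ n + C (b 0 n) * X 1 ^ n := by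
          simp +decide [hCa, zero_pow hn.ne']
        rw [hp, hd1, mul_add, mul_add, hmulsum,
          Nat.sub_zero, Nat.sub_self, pow_zero, pow_zero]
        simp only [C_mul]
        ring
end

section
/- The 4x4 generic symmetric condition for d-semistability of the tetrahedron is redundant: for nonzero scalars f_i^{jj} (i ≠ j, i,j in {1,2,3,4}), if three of the four expressions f_k^{jj} f_l^{kk} f_j^{ll} - f_j^{kk} f_k^{ll} f_l^{jj} (one for each choice of i with {i,j,k,l} = {1,2,3,4}) vanish, then so does the fourth. -/
/-- Redundancy of the four `d`-semistability conditions for the tetrahedron.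
Here `f a b` denotes the coefficient `f_a^{bb}` (`a ≠ b` in `{1,2,3,4}`), all
nonzero, and for each `i` with complement `{j,k,l}` the expression is
`E_i = f_k^{jj} f_l^{kk} f_j^{ll} - f_j^{kk} f_k^{ll} f_l^{jj}` (well defined up
to sign).  If three of the four expressions vanish, so does the fourth. -/
theorem dSemistable_fourth_condition (K : Type*) [Field K]
    (f : Fin 4 → Fin 4 → K) (hf : ∀ a b, a ≠ b → f a b ≠ 0)
    (E : Fin 4 → Fin 4 → Fin 4 → K)
    (hE : ∀ j k l, E j k l = f k j * f l k * f j l - f j k * f k l * f l j)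
    (h1 : E 1 2 3 = 0) (h2 : E 0 2 3 = 0) (h3 : E 0 1 3 = 0) :
    E 0 1 2 = 0 := by
  rw [hE] at h1 h2 h3 ⊢
  have key : (f 1 0 * f 2 1 * f 0 2 - f 0 1 * f 1 2 * f 2 0) *
      (f 3 2 * f 1 3 * f 3 1 * f 0 3 * f 2 3 * f 3 0) = 0 := by
    linear_combination (f 1 0 * f 3 1 * f 0 3 * f 0 2 * f 2 3 * f 3 0) * h1
      + (f 1 2 * f 2 3 * f 3 1 * f 0 2 * f 2 3 * f 3 0) * h3
      - (f 1 2 * f 2 3 * f 3 1 * f 0 1 * f 1 3 * f 3 0) * h2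
  have hM : (f 3 2 * f 1 3 * f 3 1 * f 0 3 * f 2 3 * f 3 0) ≠ 0 := by
    simp only [mul_ne_zero_iff]
    refine ⟨⟨⟨⟨⟨?_, ?_⟩, ?_⟩, ?_⟩, ?_⟩, ?_⟩ <;> apply hf <;> decide
  exact (mul_eq_zero.mp key).resolve_right hM
end

section
/- Consider 24 points, two pairs on each of the six edges of the coordinate tetrahedron in P^3, where the points on the edge between faces i and j are given on each side by quadratic binary forms with extremal coefficient data b_{ij} (the 'product of coordinates' data as in the triangle lemma). A necessary condition for the gluing constants λ_{ij} solving the six equations λ_{01}λ_{32} b_{31} b_{02} = λ_{02}λ_{31} (and its images under even permutations of (0,1,2,3)) to exist is b_{01}b_{10}b_{02}b_{20}b_{03}b_{30}b_{12}b_{21}b_{13}b_{31}b_{23}b_{32} = 1. -/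
/-- Necessity of the product condition for the tetrahedron gluing constants.
Given nonzero `b i j` (`i ≠ j` in `{0,1,2,3}`) and nonzero `l i j` (the λ's)
satisfying the equation `λ_{01} λ_{32} b_{31} b_{02} = λ_{02} λ_{31}` together
with all its images under even permutations of `(0,1,2,3)`, one has
`b_{01}b_{10}b_{02}b_{20}b_{03}b_{30}b_{12}b_{21}b_{13}b_{31}b_{23}b_{32} = 1`. -/
theorem tetrahedron_gluing_condition (K : Type*) [Field K]
    (b l : Fin 4 → Fin 4 → K)
    (hb : ∀ i j, i ≠ j → b i j ≠ 0) (hl : ∀ i j, i ≠ j → l i j ≠ 0)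
    (heq : ∀ σ : Equiv.Perm (Fin 4), σ ∈ alternatingGroup (Fin 4) →
      l (σ 0) (σ 1) * l (σ 3) (σ 2) * b (σ 3) (σ 1) * b (σ 0) (σ 2)
        = l (σ 0) (σ 2) * l (σ 3) (σ 1)) :
    b 0 1 * b 1 0 * b 0 2 * b 2 0 * b 0 3 * b 3 0 * b 1 2 * b 2 1 *
      b 1 3 * b 3 1 * b 2 3 * b 3 2 = 1 := by
  have h1 : l 0 1 * l 3 2 * b 3 1 * b 0 2 = l 0 2 * l 3 1 :=
    heq ⟨![0,1,2,3], ![0,1,2,3], by decide, by decide⟩ (by rw [Equiv.Perm.mem_alternatingGroup]; decide)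
  have h2 : l 0 2 * l 1 3 * b 1 2 * b 0 3 = l 0 3 * l 1 2 :=
    heq ⟨![0,2,3,1], ![0,3,1,2], by decide, by decide⟩ (by rw [Equiv.Perm.mem_alternatingGroup]; decide)
  have h3 : l 0 3 * l 2 1 * b 2 3 * b 0 1 = l 0 1 * l 2 3 :=
    heq ⟨![0,3,1,2], ![0,2,3,1], by decide, by decide⟩ (by rw [Equiv.Perm.mem_alternatingGroup]; decide)
  have h4 : l 1 0 * l 2 3 * b 2 0 * b 1 3 = l 1 3 * l 2 0 :=
    heq ⟨![1,0,3,2], ![1,0,3,2], by decide, by decide⟩ (by rw [Equiv.Perm.mem_alternatingGroup]; decide)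
  have h5 : l 1 2 * l 3 0 * b 3 2 * b 1 0 = l 1 0 * l 3 2 :=
    heq ⟨![1,2,0,3], ![2,0,1,3], by decide, by decide⟩ (by rw [Equiv.Perm.mem_alternatingGroup]; decide)
  have h6 : l 3 1 * l 2 0 * b 2 1 * b 3 0 = l 3 0 * l 2 1 :=
    heq ⟨![3,1,0,2], ![2,1,3,0], by decide, by decide⟩ (by rw [Equiv.Perm.mem_alternatingGroup]; decide)
  have H : (l 0 1 * l 3 2 * b 3 1 * b 0 2) * (l 0 2 * l 1 3 * b 1 2 * b 0 3)
      * (l 0 3 * l 2 1 * b 2 3 * b 0 1) * (l 1 0 * l 2 3 * b 2 0 * b 1 3)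
      * (l 1 2 * l 3 0 * b 3 2 * b 1 0) * (l 3 1 * l 2 0 * b 2 1 * b 3 0)
      = (l 0 2 * l 3 1) * (l 0 3 * l 1 2) * (l 0 1 * l 2 3) * (l 1 3 * l 2 0)
      * (l 1 0 * l 3 2) * (l 3 0 * l 2 1) := by
    rw [h1, h2, h3, h4, h5, h6]
  have hΛ : (l 0 1 * l 0 2 * l 0 3 * l 1 0 * l 1 2 * l 1 3 * l 2 0 * l 2 1
      * l 2 3 * l 3 0 * l 3 1 * l 3 2) ≠ 0 := by
    repeat' apply mul_ne_zero
    all_goals exact hl _ _ (by decide)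
  have := mul_right_cancel₀ hΛ (by linear_combination H :
    (b 0 1 * b 1 0 * b 0 2 * b 2 0 * b 0 3 * b 3 0 * b 1 2 * b 2 1 *
      b 1 3 * b 3 1 * b 2 3 * b 3 2) * (l 0 1 * l 0 2 * l 0 3 * l 1 0 * l 1 2 * l 1 3
      * l 2 0 * l 2 1 * l 2 3 * l 3 0 * l 3 1 * l 3 2)
    = 1 * (l 0 1 * l 0 2 * l 0 3 * l 1 0 * l 1 2 * l 1 3 * l 2 0 * l 2 1
      * l 2 3 * l 3 0 * l 3 1 * l 3 2))
  exact this
end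

section
/- The 12x6 matrix M with rows indexed by the conditions d_{ij} f_j^{ll} = d_{ik} f_k^{ll} (for the tetrahedron degree-0 deformation computation), with entries ± f_α^{ββ} as displayed, has the property that the product f_j^{kk} f_k^{ll} f_l^{jj} · (f_k^{jj} f_l^{kk} f_j^{ll} - f_j^{kk} f_k^{ll} f_l^{jj}) lies in the ideal generated by the 6x6 minors of M; in particular, if M has a nontrivial kernel and all f_i^{jj} are nonzero, then f_k^{jj} f_l^{kk} f_j^{ll} = f_j^{kk} f_k^{ll} f_l^{jj}. -/
/-!
Rows `0, 1, 2, 4, 7, 10` of `M` give a block lower triangular minor. Its upper left block is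
the `3 × 3` system on the triangle `jkl`, whose determinant is the `d`-semistability defect
`f_k^{jj} f_l^{kk} f_j^{ll} - f_j^{kk} f_k^{ll} f_l^{jj}`; its lower right block is a monomial
matrix with determinant `-f_j^{kk} f_k^{ll} f_l^{jj}`. A nonzero kernel vector of `M` kills every
maximal minor, and the monomial factor is a unit once all `f_a^{bb}` are nonzero.
-/

namespace Matrix

theorem det_submatrix_eq_zero_of_mulVec_eq_zero {m n K : Type*} [Fintype n] [DecidableEq n]
    [Field K] (M : Matrix m n K) (r : n → m) {v : n → K} (hv : v ≠ 0) (hMv : M *ᵥ v = 0) :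
    (M.submatrix r id).det = 0 :=
  exists_mulVec_eq_zero_iff.mp ⟨v, hv, funext fun i => congrFun hMv (r i)⟩

end Matrix

section Tetrahedron

variable {K : Type*} [Field K] (f : Fin 4 → Fin 4 → K)

def tetrahedronMatrix : Matrix (Fin 12) (Fin 6) K :=
  !![0, f 2 1, -f 3 1, 0, 0, 0;
     -f 1 2, 0, f 3 2, 0, 0, 0;
     f 1 3, -f 2 3, 0, 0, 0, 0;
     f 0 2, 0, 0, 0, -f 3 2, 0;
     -f 0 3, 0, 0, f 2 3, 0, 0;
     0, 0, 0, -f 2 0, f 3 0, 0;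
     0, f 0 3, 0, -f 1 3, 0, 0;
     0, -f 0 1, 0, 0, 0, f 3 1;
     0, 0, 0, f 1 0, 0, -f 3 0;
     0, 0, f 0 1, 0, 0, -f 2 1;
     0, 0, -f 0 2, 0, f 1 2, 0;
     0, 0, 0, 0, -f 1 0, f 2 0]

def tetrahedronMinorRows : Fin 6 → Fin 12 := ![0, 1, 2, 4, 7, 10]

theorem tetrahedronMinorRows_injective : Function.Injective tetrahedronMinorRows := by
  decide

theorem tetrahedronMatrix_submatrix_minorRows_eq_fromBlocks :
    (tetrahedronMatrix f).submatrix tetrahedronMinorRows id =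
      (Matrix.fromBlocks
        !![0, f 2 1, -f 3 1; -f 1 2, 0, f 3 2; f 1 3, -f 2 3, 0] 0
        !![-f 0 3, 0, 0; 0, -f 0 1, 0; 0, 0, -f 0 2]
        !![f 2 3, 0, 0; 0, 0, f 3 1; 0, f 1 2, 0]).submatrix
        finSumFinEquiv.symm finSumFinEquiv.symm := by
  ext i j
  fin_cases i <;> fin_cases j <;> rfl

theorem det_tetrahedronMatrix_submatrix_minorRows :
    ((tetrahedronMatrix f).submatrix tetrahedronMinorRows id).det =
      -(f 1 2 * f 2 3 * f 3 1 * (f 2 1 * f 3 2 * f 1 3 - f 1 2 * f 2 3 * f 3 1)) := by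
  rw [tetrahedronMatrix_submatrix_minorRows_eq_fromBlocks, Matrix.det_submatrix_equiv_self,
    Matrix.det_fromBlocks_zero₁₂, Matrix.det_fin_three, Matrix.det_fin_three]
  simp only [Matrix.of_apply, Matrix.cons_val', Matrix.cons_val_zero, Matrix.cons_val_one,
    Matrix.cons_val, Matrix.cons_val_fin_one]
  ring

end Tetrahedron

/-- The `12 × 6` coefficient matrix of the linear system for the unknowns
`d_{ij}` in the degree-0 deformation computation for the tetrahedron, with
entries `± f_a^{bb}` (written `f a b`) and `(i,j,k,l) = (1,2,3,4)` realised as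
`(0,1,2,3) : Fin 4`.  Some `6 × 6` minor equals (up to sign)
`f_j^{kk} f_k^{ll} f_l^{jj} (f_k^{jj} f_l^{kk} f_j^{ll} - f_j^{kk} f_k^{ll} f_l^{jj})`,
so this product lies in the ideal of `6 × 6` minors; in particular, if the
system has a nontrivial solution and all `f a b` are nonzero, then the
`d`-semistability equation `f_k^{jj} f_l^{kk} f_j^{ll} = f_j^{kk} f_k^{ll} f_l^{jj}`
holds. -/
theorem tetrahedron_minor_and_dSemistability (K : Type*) [Field K]
    (f : Fin 4 → Fin 4 → K)
    (M : Matrix (Fin 12) (Fin 6) K)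
    (hM : M = !![0, f 2 1, -f 3 1, 0, 0, 0;
                 -f 1 2, 0, f 3 2, 0, 0, 0;
                 f 1 3, -f 2 3, 0, 0, 0, 0;
                 f 0 2, 0, 0, 0, -f 3 2, 0;
                 -f 0 3, 0, 0, f 2 3, 0, 0;
                 0, 0, 0, -f 2 0, f 3 0, 0;
                 0, f 0 3, 0, -f 1 3, 0, 0;
                 0, -f 0 1, 0, 0, 0, f 3 1;
                 0, 0, 0, f 1 0, 0, -f 3 0;
                 0, 0, f 0 1, 0, 0, -f 2 1;
                 0, 0, -f 0 2, 0, f 1 2, 0;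
                 0, 0, 0, 0, -f 1 0, f 2 0]) :
    (∃ r : Fin 6 → Fin 12, Function.Injective r ∧
      ((M.submatrix r id).det =
          f 1 2 * f 2 3 * f 3 1 * (f 2 1 * f 3 2 * f 1 3 - f 1 2 * f 2 3 * f 3 1) ∨
        (M.submatrix r id).det =
          -(f 1 2 * f 2 3 * f 3 1 * (f 2 1 * f 3 2 * f 1 3 - f 1 2 * f 2 3 * f 3 1)))) ∧
    ((∀ a b : Fin 4, a ≠ b → f a b ≠ 0) → (∃ v : Fin 6 → K, v ≠ 0 ∧ M.mulVec v = 0) →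
      f 2 1 * f 3 2 * f 1 3 = f 1 2 * f 2 3 * f 3 1) := by
  obtain rfl : M = tetrahedronMatrix f := hM
  have hdet := det_tetrahedronMatrix_submatrix_minorRows f
  refine ⟨⟨_, tetrahedronMinorRows_injective, Or.inr hdet⟩, ?_⟩
  rintro hf ⟨v, hv, hMv⟩
  have hminor := (tetrahedronMatrix f).det_submatrix_eq_zero_of_mulVec_eq_zero
    tetrahedronMinorRows hv hMv
  have hmonomial : f 1 2 * f 2 3 * f 3 1 ≠ 0 :=
    mul_ne_zero (mul_ne_zero (hf 1 2 (by decide)) (hf 2 3 (by decide))) (hf 3 1 (by decide))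
  rw [hdet, neg_eq_zero, mul_eq_zero, sub_eq_zero] at hminor
  exact hminor.resolve_left hmonomial
end
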